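/- Let g ≥ 1 and let τ be a g × g complex symmetric matrix with positive definite imaginary part. Let M be a symmetric g × g integer matrix, A ∈ GL(g, ℤ) with A M Aᵀ ≡ M (mod 2), and set τ̃ = A τ Aᵀ + (1/2)(M - A M Aᵀ). Given β ∈ ℤ^g, set β̃ = A β + (1/2)·diag(M - A M Aᵀ). Then for all z ∈ ℂ^g, θ[0; β̃](A z, τ̃) = θ[0; β](z, τ), where θ[α; β](z, τ) = Σ_{m ∈ ℤ^g} exp(πi (m + α/2)ᵀ τ (m + α/2) + 2πi (z + β/2)ᵀ (m + α/2)) is the Riemann theta function with characteristics. -/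

import Mathlib

open Matrix

/-- The Riemann theta function with characteristics `α, β`. -/
noncomputable def thetaChar {g : ℕ} (α β : Fin g → ℝ) (z : Fin g → ℂ)
    (τ : Matrix (Fin g) (Fin g) ℂ) : ℂ :=
  ∑' m : Fin g → ℤ,
    Complex.exp (Real.pi * Complex.I *
        ((fun i => (m i : ℂ) + (α i : ℂ) / 2) ⬝ᵥ
          τ.mulVec (fun i => (m i : ℂ) + (α i : ℂ) / 2)) +
      2 * Real.pi * Complex.I *
        ((fun i => z i + (β i : ℂ) / 2) ⬝ᵥ (fun i => (m i : ℂ) + (α i : ℂ) / 2)))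

lemma zmod2_symm_sum {g : ℕ} (c : Fin g → Fin g → ZMod 2)
    (hsymm : ∀ i j, c i j = c j i) :
    ∑ i, ∑ j, c i j = ∑ i, c i i := by
  classical
  have h1 : ∀ x : ZMod 2, x + x = 0 := by decide
  set F : Fin g × Fin g → ZMod 2 := fun p => if p.1 = p.2 then 0 else c p.1 p.2 with hF
  have hsum0 : ∑ p : Fin g × Fin g, F p = 0 := by
    refine Finset.sum_ninvolution Prod.swap ?_ ?_ (fun a => Finset.mem_univ _)
      (fun a => Prod.swap_swap a)
    · intro a
      rcases eq_or_ne a.1 a.2 with h | h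
      · simp [hF, h]
      · simp [hF, h, Ne.symm h, hsymm a.1 a.2, h1]
    · intro a ha
      intro hs
      apply ha
      have : a.2 = a.1 := congrArg Prod.fst hs
      simp [hF, this.symm]
  have hexp : ∑ p : Fin g × Fin g, F p = (∑ i, ∑ j, c i j) - ∑ i, c i i := by
    rw [Fintype.sum_prod_type]
    rw [← Finset.sum_sub_distrib]
    refine Finset.sum_congr rfl fun i _ => ?_
    have : ∀ j, F (i, j) = c i j - if i = j then c i j else 0 := by
      intro j; rcases eq_or_ne i j with h | h <;> simp [hF, h]
    simp only [this]
    rw [Finset.sum_sub_distrib, Finset.sum_ite_eq, if_pos (Finset.mem_univ i)]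
  rw [hsum0] at hexp
  linear_combination -hexp

lemma even_quad {g : ℕ} (K : Matrix (Fin g) (Fin g) ℤ) (hK : Kᵀ = K) (n : Fin g → ℤ) :
    (2:ℤ) ∣ (n ⬝ᵥ K *ᵥ n + ∑ i, K i i * n i) := by
  suffices h : ((n ⬝ᵥ K *ᵥ n + ∑ i, K i i * n i : ℤ) : ZMod 2) = 0 by
    exact_mod_cast (ZMod.intCast_zmod_eq_zero_iff_dvd _ 2).mp h
  push_cast [dotProduct, Matrix.mulVec]
  have hsq : ∀ x : ZMod 2, x * x = x := by decide
  have h1 : ∀ x : ZMod 2, x + x = 0 := by decide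
  have key := zmod2_symm_sum (fun i j => (K i j : ZMod 2) * (n i : ZMod 2) * (n j : ZMod 2))
    (fun i j => by
      have hKs : K i j = K j i := by conv_lhs => rw [← hK, Matrix.transpose_apply]
      show (K i j : ZMod 2) * (n i : ZMod 2) * (n j : ZMod 2) = (K j i : ZMod 2) * (n j : ZMod 2) * (n i : ZMod 2); rw [hKs]; ring)
  have lhs1 : ∑ i, (n i : ZMod 2) * ∑ j, (K i j : ZMod 2) * (n j : ZMod 2)
      = ∑ i, ∑ j, (K i j : ZMod 2) * (n i : ZMod 2) * (n j : ZMod 2) := by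
    refine Finset.sum_congr rfl fun i _ => ?_
    rw [Finset.mul_sum]
    exact Finset.sum_congr rfl fun j _ => by ring
  rw [lhs1, key]
  have : ∑ i, (K i i : ZMod 2) * (n i : ZMod 2) * (n i : ZMod 2)
      = ∑ i, (K i i : ZMod 2) * (n i : ZMod 2) := by
    refine Finset.sum_congr rfl fun i _ => ?_
    rw [mul_assoc, hsq]
  rw [this, ← Finset.sum_add_distrib]
  rw [Finset.sum_eq_zero fun i _ => h1 _]

lemma dot_add_half {g : ℕ} (u v w : Fin g → ℂ) :
    (fun i => u i + v i / 2) ⬝ᵥ w = u ⬝ᵥ w + (1/2) * (v ⬝ᵥ w) := by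
  simp only [dotProduct, Finset.mul_sum, ← Finset.sum_add_distrib]
  exact Finset.sum_congr rfl fun i _ => by ring

theorem stmt4 (g : ℕ) (hg : 1 ≤ g)
    (τ : Matrix (Fin g) (Fin g) ℂ) (hτ : τ.IsSymm)
    (hpos : (Matrix.of fun i j => (τ i j).im).PosDef)
    (M : Matrix (Fin g) (Fin g) ℤ) (hM : M.IsSymm)
    (A : Matrix (Fin g) (Fin g) ℤ) (hA : IsUnit A.det)
    (hAM : ∀ i j, (A * M * Aᵀ) i j ≡ M i j [ZMOD 2])
    (β βt : Fin g → ℤ)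
    (hβt : ∀ i, 2 * βt i = 2 * (A.mulVec β) i + (M - A * M * Aᵀ) i i)
    (τt : Matrix (Fin g) (Fin g) ℂ)
    (hτt : τt = A.map (fun n : ℤ => (n : ℂ)) * τ * (A.map (fun n : ℤ => (n : ℂ)))ᵀ +
      (1 / 2 : ℂ) • (M - A * M * Aᵀ).map (fun n : ℤ => (n : ℂ))) :
    ∀ z : Fin g → ℂ,
      thetaChar 0 (fun i => (βt i : ℝ)) ((A.map (fun n : ℤ => (n : ℂ))).mulVec z) τt =
        thetaChar 0 (fun i => (β i : ℝ)) z τ := by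
  intro z
  classical
  set N : Matrix (Fin g) (Fin g) ℤ := M - A * M * Aᵀ with hN
  have hNsymm : Nᵀ = N := by
    rw [hN, Matrix.transpose_sub, Matrix.transpose_mul, Matrix.transpose_mul,
      Matrix.transpose_transpose, hM.eq, ← Matrix.mul_assoc]
  have hNeven : ∀ i j, (2:ℤ) ∣ N i j := by
    intro i j
    have := (hAM i j).dvd
    simpa [hN, Matrix.sub_apply] using this
  -- the halved matrix
  set K : Matrix (Fin g) (Fin g) ℤ := Matrix.of fun i j => N i j / 2 with hK
  have hNK : ∀ i j, N i j = 2 * K i j := by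
    intro i j
    exact (Int.mul_ediv_cancel' (hNeven i j)).symm
  have hKsymm : Kᵀ = K := by
    ext i j
    simp only [Matrix.transpose_apply, hK, Matrix.of_apply]
    rw [show N j i = N i j from by conv_lhs => rw [← hNsymm, Matrix.transpose_apply]]
  set Ac := A.map (fun n : ℤ => (n : ℂ)) with hAc
  set Nc := N.map (fun n : ℤ => (n : ℂ)) with hNc
  -- the reindexing bijection
  have hAA := Matrix.mul_nonsing_inv A hA
  have hAA' := Matrix.nonsing_inv_mul A hA
  let e : (Fin g → ℤ) ≃ (Fin g → ℤ) :=
    { toFun := fun n => Aᵀ *ᵥ n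
      invFun := fun m => (A⁻¹)ᵀ *ᵥ m
      left_inv := fun n => by
        show (A⁻¹)ᵀ *ᵥ (Aᵀ *ᵥ n) = n
        rw [Matrix.mulVec_mulVec, ← Matrix.transpose_mul, hAA, Matrix.transpose_one,
          Matrix.one_mulVec]
      right_inv := fun m => by
        show Aᵀ *ᵥ ((A⁻¹)ᵀ *ᵥ m) = m
        rw [Matrix.mulVec_mulVec, ← Matrix.transpose_mul, hAA', Matrix.transpose_one,
          Matrix.one_mulVec] }
  unfold thetaChar
  conv_rhs => rw [← Equiv.tsum_eq e]
  refine tsum_congr fun n => ?_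
  simp only [e, Equiv.coe_fn_mk, Pi.zero_apply, Complex.ofReal_zero, zero_div, add_zero,
    Complex.ofReal_intCast]
  set nc : Fin g → ℂ := fun i => (n i : ℂ) with hnc
  have hcast : ∀ (B : Matrix (Fin g) (Fin g) ℤ) (v : Fin g → ℤ) (i : Fin g),
      ((B *ᵥ v) i : ℂ) = ((B.map (fun k : ℤ => (k : ℂ))) *ᵥ (fun j => (v j : ℂ))) i := by
    intro B v i
    exact RingHom.map_mulVec (Int.castRingHom ℂ) B v i
  have hmc : (fun i => ((Aᵀ *ᵥ n) i : ℂ)) = Acᵀ *ᵥ nc := by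
    funext i
    rw [hcast, Matrix.transpose_map]
  rw [hmc]
  -- quadratic identity
  have h1 : nc ⬝ᵥ τt *ᵥ nc
      = (Acᵀ *ᵥ nc) ⬝ᵥ τ *ᵥ (Acᵀ *ᵥ nc) + (1/2) * (nc ⬝ᵥ Nc *ᵥ nc) := by
    rw [hτt, Matrix.add_mulVec, dotProduct_add, Matrix.smul_mulVec,
      dotProduct_smul, smul_eq_mul, ← Matrix.mulVec_mulVec, ← Matrix.mulVec_mulVec,
      Matrix.dotProduct_mulVec nc Ac, ← Matrix.mulVec_transpose]
  -- linear identities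
  have h2 : ∀ w : Fin g → ℂ, (Ac *ᵥ w) ⬝ᵥ nc = w ⬝ᵥ (Acᵀ *ᵥ nc) := by
    intro w
    rw [dotProduct_comm, Matrix.dotProduct_mulVec, ← Matrix.mulVec_transpose,
      dotProduct_comm]
  -- beta identity
  have h3 : 2 * ((fun i => (βt i : ℂ)) ⬝ᵥ nc)
      = 2 * ((Ac *ᵥ fun i => (β i : ℂ)) ⬝ᵥ nc) + ∑ i, (N i i : ℂ) * (n i : ℂ) := by
    simp only [dotProduct, Finset.mul_sum, ← Finset.sum_add_distrib]
    refine Finset.sum_congr rfl fun i _ => ?_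
    have hv : ((Ac *ᵥ fun i => (β i : ℂ)) i) = ((A *ᵥ β) i : ℂ) := (hcast A β i).symm
    rw [hv]
    have hcc : (2 : ℂ) * (βt i : ℂ) = 2 * ((A *ᵥ β) i : ℂ) + (N i i : ℂ) := by
      exact_mod_cast congrArg (fun x : ℤ => (x : ℂ)) (hβt i)
    linear_combination ((n i : ℂ)) * hcc
  -- divisibility
  obtain ⟨t, ht⟩ := even_quad K hKsymm n
  have hS : n ⬝ᵥ N *ᵥ n + ∑ i, N i i * n i = 4 * t := by
    have hquad : n ⬝ᵥ N *ᵥ n = 2 * (n ⬝ᵥ K *ᵥ n) := by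
      simp only [dotProduct, Matrix.mulVec, Finset.mul_sum]
      refine Finset.sum_congr rfl fun i _ => Finset.sum_congr rfl fun j _ => ?_
      rw [hNK i j]; ring
    have hdiag : ∑ i, N i i * n i = 2 * ∑ i, K i i * n i := by
      rw [Finset.mul_sum]
      refine Finset.sum_congr rfl fun i _ => ?_
      rw [hNK i i]; ring
    rw [hquad, hdiag]
    omega
  -- cast of S
  have hScast : nc ⬝ᵥ Nc *ᵥ nc + ∑ i, (N i i : ℂ) * (n i : ℂ) = 4 * (t : ℂ) := by
    have hcg := congrArg (fun x : ℤ => (x : ℂ)) hS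
    push_cast [dotProduct, Matrix.mulVec] at hcg
    simp only [dotProduct, Matrix.mulVec, hnc, hNc, Matrix.map_apply]
    convert hcg using 2
  -- final exponent manipulation
  rw [dot_add_half ((Ac *ᵥ z)) (fun i => (βt i : ℂ)) nc,
    dot_add_half z (fun i => (β i : ℂ)) (Acᵀ *ᵥ nc),
    h1, h2 z]
  have h4 : (fun i => (β i : ℂ)) ⬝ᵥ (Acᵀ *ᵥ nc) = (Ac *ᵥ fun i => (β i : ℂ)) ⬝ᵥ nc :=
    (h2 _).symm
  rw [h4]
  have hfin : Real.pi * Complex.I *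
        ((Acᵀ *ᵥ nc) ⬝ᵥ τ *ᵥ (Acᵀ *ᵥ nc) + 1 / 2 * (nc ⬝ᵥ Nc *ᵥ nc)) +
      2 * Real.pi * Complex.I *
        (z ⬝ᵥ (Acᵀ *ᵥ nc) + 1 / 2 * ((fun i => (βt i : ℂ)) ⬝ᵥ nc))
      = (Real.pi * Complex.I * ((Acᵀ *ᵥ nc) ⬝ᵥ τ *ᵥ (Acᵀ *ᵥ nc)) +
          2 * Real.pi * Complex.I *
            (z ⬝ᵥ (Acᵀ *ᵥ nc) + 1 / 2 * ((Ac *ᵥ fun i => (β i : ℂ)) ⬝ᵥ nc)))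
        + (t : ℂ) * (2 * Real.pi * Complex.I) := by
    linear_combination (Real.pi * Complex.I / 2) * h3 + (Real.pi * Complex.I / 2) * hScast
  rw [hfin, Complex.exp_add, Complex.exp_int_mul_two_pi_mul_I, mul_one]
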